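/- Shen's sixth-order conservative scheme for u'' equals the linear combination Σ_{m=1}^{8} D_m (u_{j+m} − 2u_j + u_{j−m})/(mΔx)² with D₁ = 31895/131072, D₂ = 333251/153600, D₃ = −6967107/3276800, D₄ = 26711/30720, D₅ = −69475/393216, D₆ = 223/10240, D₇ = −13769/9830400, D₈ = 3/51200; equivalently, its Fourier symbol satisfies F^{Shen}(t) = −Σ_{m=1}^{8} D_m (4/m²) sin²(mt/2) for all t. -/

import Mathlib

open Real

/-- Sixth-order central-difference cell-center gradient applied to a sequence. -/
noncomputable def grad6U (Δx : ℝ) (u : ℤ → ℂ) (m : ℤ) : ℂ :=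
  (45 * (u (m+1) - u (m-1)) - 9 * (u (m+2) - u (m-2)) + (u (m+3) - u (m-3)))
    / (60 * (Δx : ℂ))

/-- Shen's interface numerical flux `F̂_{j+1/2}`. -/
noncomputable def shenFluxU (Δx : ℝ) (u : ℤ → ℂ) (j : ℤ) : ℂ :=
  (3 * grad6U Δx u (j-2) - 25 * grad6U Δx u (j-1) + 150 * grad6U Δx u j
    + 150 * grad6U Δx u (j+1) - 25 * grad6U Δx u (j+2) + 3 * grad6U Δx u (j+3)) / 256

/-- Shen's sixth-order conservative approximation of the second derivative at cell `j`. -/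
noncomputable def shenSchemeU (Δx : ℝ) (u : ℤ → ℂ) (j : ℤ) : ℂ :=
  ((75/64) * (shenFluxU Δx u j - shenFluxU Δx u (j-1))
    + (-25/384) * (shenFluxU Δx u (j+1) - shenFluxU Δx u (j-2))
    + (3/640) * (shenFluxU Δx u (j+2) - shenFluxU Δx u (j-3))) / Δx

/-- Fourier symbol of Shen's scheme. -/
noncomputable def shenSymbol (t : ℝ) : ℝ :=
  -(Real.sin t ^ 2 * (3 * Real.cos t ^ 2 - 14 * Real.cos t + 43)
      * (9 * Real.cos t ^ 2 - 58 * Real.cos t + 529)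
      * (2 * Real.cos t ^ 2 - 9 * Real.cos t + 22)) / 230400

/-- The stencil coefficients `D₁, …, D₈`. -/
noncomputable def shenD : ℕ → ℝ
  | 1 => 31895/131072
  | 2 => 333251/153600
  | 3 => -6967107/3276800
  | 4 => 26711/30720
  | 5 => -69475/393216
  | 6 => 223/10240
  | 7 => -13769/9830400
  | 8 => 3/51200
  | _ => 0

lemma shen_sin_sq_half (x : ℝ) : Real.sin (x/2)^2 = (1 - Real.cos x)/2 := by
  have h := Real.cos_sq (x/2)
  rw [show 2*(x/2) = x by ring] at h
  rw [Real.sin_sq, h]; ring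

set_option maxHeartbeats 2000000 in
/-- Shen's scheme equals the linear combination of `m`-spaced central
differences with the coefficients `D_m`, and equivalently its symbol equals
`−Σ_{m=1}^8 D_m (4/m²) sin²(mt/2)`. -/
theorem shenScheme_stencil_representation :
    (∀ (Δx : ℝ), Δx ≠ 0 → ∀ (u : ℤ → ℂ) (j : ℤ),
      shenSchemeU Δx u j
        = ∑ m ∈ Finset.Icc 1 8,
            (shenD m : ℂ) * (u (j + m) - 2 * u j + u (j - m)) / ((m * Δx : ℂ)^2))
    ∧ (∀ t : ℝ,
        shenSymbol t
          = -∑ m ∈ Finset.Icc 1 8, shenD m * (4 / (m:ℝ)^2) * Real.sin (m * t / 2) ^ 2) := by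
  constructor
  · intro Δx hΔ u j
    have hΔ' : (Δx : ℂ) ≠ 0 := Complex.ofReal_ne_zero.mpr hΔ
    rw [show (Finset.Icc 1 8 : Finset ℕ) = {1,2,3,4,5,6,7,8} from rfl,
      Finset.sum_insert (by decide), Finset.sum_insert (by decide),
      Finset.sum_insert (by decide), Finset.sum_insert (by decide),
      Finset.sum_insert (by decide), Finset.sum_insert (by decide),
      Finset.sum_insert (by decide), Finset.sum_singleton]
    simp only [shenD, shenSchemeU, shenFluxU, grad6U]
    simp only [div_eq_mul_inv, mul_pow, mul_inv]
    push_cast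
    set_option maxRecDepth 100000 in
    ring
  · intro t
    have hrec : ∀ a b : ℝ, Real.cos (a+b) = 2*Real.cos a*Real.cos b - Real.cos (a-b) := by
      intro a b; rw [Real.cos_add, Real.cos_sub]; ring
    have c2 : Real.cos (2*t) = 2*Real.cos t^2 - 1 := Real.cos_two_mul t
    have c3 : Real.cos (3*t) = 2*Real.cos t*Real.cos (2*t) - Real.cos t := by
      have := hrec (2*t) t; rw [show 2*t+t = 3*t by ring, show 2*t-t = t by ring] at this
      linarith
    have c4 : Real.cos (4*t) = 2*Real.cos t*Real.cos (3*t) - Real.cos (2*t) := by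
      have := hrec (3*t) t; rw [show 3*t+t = 4*t by ring, show 3*t-t = 2*t by ring] at this
      linarith
    have c5 : Real.cos (5*t) = 2*Real.cos t*Real.cos (4*t) - Real.cos (3*t) := by
      have := hrec (4*t) t; rw [show 4*t+t = 5*t by ring, show 4*t-t = 3*t by ring] at this
      linarith
    have c6 : Real.cos (6*t) = 2*Real.cos t*Real.cos (5*t) - Real.cos (4*t) := by
      have := hrec (5*t) t; rw [show 5*t+t = 6*t by ring, show 5*t-t = 4*t by ring] at this
      linarith
    have c7 : Real.cos (7*t) = 2*Real.cos t*Real.cos (6*t) - Real.cos (5*t) := by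
      have := hrec (6*t) t; rw [show 6*t+t = 7*t by ring, show 6*t-t = 5*t by ring] at this
      linarith
    have c8 : Real.cos (8*t) = 2*Real.cos t*Real.cos (7*t) - Real.cos (6*t) := by
      have := hrec (7*t) t; rw [show 7*t+t = 8*t by ring, show 7*t-t = 6*t by ring] at this
      linarith
    rw [show (Finset.Icc 1 8 : Finset ℕ) = {1,2,3,4,5,6,7,8} from rfl]
    simp only [Finset.sum_insert, Finset.mem_insert, Finset.sum_singleton, shenD]
    norm_num [shen_sin_sq_half, shenSymbol]
    rw [Real.sin_sq, c8, c7, c6, c5, c4, c3, c2]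
    ring
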